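/- Let s ≥ 3, w_0 > 1, and define R_s(x) = 1 + b_{s−1} x + γ_s(T_s(w_0 + w_1 x) − T_s(w_0)) + δ_s(T_{s−2}(w_0 + w_1 x) − T_{s−2}(w_0)) with b_{s−1} = 1/(1 + T_{s−1}(w_0)), w_1 = (1 + T_{s−1}(w_0))/T_{s−1}′(w_0), γ_s = b_{s−1}/(2 s w_1), δ_s = −b_{s−1}/(2(s−2) w_1). Then R_s(0) = 1, R_s′(0) = 1, and R_s′′(0) = 1. -/

import Mathlib

/-
The two Chebyshev terms of `R_s` combine to `(b / w₁) · F(w₀ + w₁ x)` with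
`F = T_s / (2s) - T_{s-2} / (2(s-2))`, and `F' = (U_{s-1} - U_{s-3}) / 2 = T_{s-1}`. Hence
`R_s'(x) = b (1 + T_{s-1}(w₀ + w₁ x))` and `R_s''(x) = b w₁ T_{s-1}'(w₀ + w₁ x)`, and the choice of
`b` and `w₁` makes both equal to `1` at `x = 0`. The divisions are legitimate because
`T_{s-1}(w₀) ≥ 1` and `T_{s-1}'(w₀) = (s-1) U_{s-2}(w₀) > 0` for `w₀ > 1`.
-/

open Real

/-- Chebyshev polynomial of the first kind, as a real function. -/
noncomputable def chebT : ℕ → ℝ → ℝ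
  | 0, _ => 1
  | 1, x => x
  | (n+2), x => 2 * x * chebT (n+1) x - chebT n x

open Polynomial Polynomial.Chebyshev

lemma chebT_eq_eval_T (n : ℕ) (x : ℝ) : chebT n x = (T ℝ n).eval x := by
  fun_induction chebT n x with
  | case1 => simp
  | case2 => simp
  | case3 n x ih₁ ih₀ =>
    rw [ih₁, ih₀, show ((n + 2 : ℕ) : ℤ) = n + 2 by push_cast; ring, T_add_two]
    simp

lemma hasDerivAt_chebT (n : ℕ) (x : ℝ) :
    HasDerivAt (chebT n) ((derivative (T ℝ n)).eval x) x := by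
  simpa only [← funext (chebT_eq_eval_T n)] using (T ℝ n).hasDerivAt x

lemma one_le_chebT (n : ℕ) {x : ℝ} (hx : 1 ≤ x) : 1 ≤ chebT n x :=
  chebT_eq_eval_T n x ▸ one_le_eval_T_real n hx

lemma eval_U_real_pos (n : ℕ) {x : ℝ} (hx : 1 < x) : 0 < (U ℝ n).eval x := by
  have hθ := arcosh_pos hx
  have h := U_real_cosh (arcosh x) n
  rw [cosh_arcosh hx.le] at h
  push_cast at h
  have hsinh : 0 < sinh ((n + 1) * arcosh x) := sinh_pos_iff.mpr (by positivity)
  exact pos_of_mul_pos_left (h ▸ hsinh) (sinh_pos_iff.mpr hθ).le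

lemma deriv_chebT_pos {n : ℕ} (hn : n ≠ 0) {x : ℝ} (hx : 1 < x) : 0 < deriv (chebT n) x := by
  obtain ⟨m, rfl⟩ := Nat.exists_eq_succ_of_ne_zero hn
  rw [(hasDerivAt_chebT _ x).deriv, T_derivative_eq_U, eval_mul,
    show ((m + 1 : ℕ) : ℤ) - 1 = m by push_cast; ring, eval_intCast]
  exact mul_pos (by positivity) (eval_U_real_pos m hx)

lemma eval_derivative_T_add_two_div_sub (n : ℕ) (u : ℝ) :
    (derivative (T ℝ (n + 2 : ℕ))).eval u / (2 * ((n : ℝ) + 2))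
      - (derivative (T ℝ n)).eval u / (2 * n) = (T ℝ (n + 1 : ℕ)).eval u := by
  rcases n with _ | m
  -- for `n = 0` the second term is `0 / 0 = 0`, matching `T_0' = 0`
  · norm_num [T_two, mul_div_assoc, ← mul_assoc]
  · have h := congrArg (eval u) (two_mul_T_eq_U_sub_U ℝ m)
    have : (m : ℝ) + 1 + 2 ≠ 0 := by positivity
    have : (m : ℝ) + 1 ≠ 0 := by positivity
    simp only [T_derivative_eq_U]
    push_cast
    rw [show (m : ℤ) + 1 + 2 - 1 = m + 2 by ring, show (m : ℤ) + 1 - 1 = m by ring,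
      show (m : ℤ) + 1 + 1 = m + 2 by ring]
    simp only [eval_mul, eval_add, eval_sub, eval_natCast, eval_one, eval_ofNat] at h ⊢
    field_simp
    linear_combination -h

lemma hasDerivAt_chebT_div_sub_chebT_div {s : ℕ} (hs : 2 ≤ s) (u : ℝ) :
    HasDerivAt (fun u => chebT s u / (2 * s) - chebT (s - 2) u / (2 * ((s : ℝ) - 2)))
      (chebT (s - 1) u) u := by
  obtain ⟨n, rfl⟩ := Nat.exists_eq_add_of_le' hs
  have h := ((hasDerivAt_chebT (n + 2) u).div_const (2 * ((n : ℝ) + 2))).sub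
    ((hasDerivAt_chebT n u).div_const (2 * (n : ℝ)))
  rw [eval_derivative_T_add_two_div_sub, ← chebT_eq_eval_T] at h
  simp only [Nat.add_sub_cancel, Nat.cast_add, Nat.cast_ofNat, add_sub_cancel_right]
  exact h

theorem stmt9 (s : ℕ) (hs : 3 ≤ s) (w0 : ℝ) (hw0 : 1 < w0) :
    let b : ℝ := 1 / (1 + chebT (s-1) w0)
    let w1 : ℝ := (1 + chebT (s-1) w0) / deriv (chebT (s-1)) w0
    let γ : ℝ := b / (2 * s * w1)
    let δ : ℝ := -b / (2 * (s-2) * w1)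
    let R : ℝ → ℝ := fun x => 1 + b * x
      + γ * (chebT s (w0 + w1 * x) - chebT s w0)
      + δ * (chebT (s-2) (w0 + w1 * x) - chebT (s-2) w0)
    R 0 = 1 ∧ deriv R 0 = 1 ∧ deriv (deriv R) 0 = 1 := by
  intro b w1 γ δ R
  have hT : 0 < 1 + chebT (s - 1) w0 := by linarith [one_le_chebT (s - 1) hw0.le]
  have hD : 0 < deriv (chebT (s - 1)) w0 := deriv_chebT_pos (by omega) hw0
  have hw1 : w1 ≠ 0 := by positivity
  set F : ℝ → ℝ := fun u => chebT s u / (2 * s) - chebT (s - 2) u / (2 * ((s : ℝ) - 2))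
  have hRF : R = fun x => 1 + b * x + b / w1 * (F (w0 + w1 * x) - F w0) := by
    funext x
    simp only [R, F, γ, δ, div_eq_mul_inv, mul_inv]
    ring
  have hu (x : ℝ) : HasDerivAt (fun x => w0 + w1 * x) w1 x := by
    simpa using ((hasDerivAt_id x).const_mul w1).const_add w0
  have hR' (x : ℝ) : HasDerivAt R (b * (1 + chebT (s - 1) (w0 + w1 * x))) x := by
    have hFu := (hasDerivAt_chebT_div_sub_chebT_div (s := s) (by omega) _).comp x (hu x)
    rw [hRF]
    refine ((((hasDerivAt_id x).const_mul b).const_add 1).add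
      ((hFu.sub_const (F w0)).const_mul (b / w1))).congr_deriv ?_
    field_simp
  have hR'' : HasDerivAt (deriv R) (b * (deriv (chebT (s - 1)) w0 * w1)) 0 := by
    have hT' : HasDerivAt (chebT (s - 1)) (deriv (chebT (s - 1)) w0) (w0 + w1 * 0) := by
      simpa using (hasDerivAt_chebT (s - 1) w0).differentiableAt.hasDerivAt
    rw [funext fun x => (hR' x).deriv]
    exact ((hT'.comp 0 (hu 0)).const_add 1).const_mul b
  refine ⟨by simp [R], ?_, ?_⟩
  · rw [(hR' 0).deriv, mul_zero, add_zero]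
    simp only [b]
    field_simp
  · rw [hR''.deriv]
    simp only [b, w1]
    field_simp
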